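/- arXiv:1611.02983 — 2 statements merged into one kernel-verified Lean document; each statement's English description precedes it below -/
import Mathlib

section
/- Fix integers c ≥ 0 and b ≥ 2. There is no positive integer a such that a, a + 1, and a + 2 are all fixed points of S_{[c,b]}; that is, S_{[c,b]} has no three consecutive fixed points. -/
/-- The augmented generalized happy function: `c` plus the sum of the squares
of the base-`b` digits of `a`. -/
def S (c b a : ℕ) : ℕ := c + ((Nat.digits b a).map (· ^ 2)).sum

/-!
If `a` and `a + 1` are both fixed points of `S_{[c,b]}`, the digit-square sum grows by exactly `1`
from `a` to `a + 1`. Without a carry, incrementing the last digit `d` adds `2d + 1`, so `d = 0`;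
with a carry it cannot grow at all, because (by induction on the number of trailing digits
`b - 1`) one increment never raises it by more than `(b - 1) ^ 2`, the square lost with the last
digit. Hence `b ∣ a`, and three consecutive fixed points would give `b ∣ a` and `b ∣ a + 1`.
-/

def digitSqSum (b n : ℕ) : ℕ := ((Nat.digits b n).map (· ^ 2)).sum

theorem S_eq_add_digitSqSum (c b a : ℕ) : S c b a = c + digitSqSum b a := rfl

section digitSqSum

variable {b : ℕ}

theorem digitSqSum_eq (hb : 1 < b) (n : ℕ) :
    digitSqSum b n = (n % b) ^ 2 + digitSqSum b (n / b) := by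
  rcases n.eq_zero_or_pos with rfl | hn
  · simp [digitSqSum]
  · simp [digitSqSum, Nat.digits_def' hb hn]

theorem digitSqSum_succ_of_mod_add_one_lt (hb : 1 < b) {n : ℕ} (h : n % b + 1 < b) :
    digitSqSum b (n + 1) = digitSqSum b n + 2 * (n % b) + 1 := by
  obtain ⟨hdiv, hmod⟩ : (n + 1) / b = n / b ∧ (n + 1) % b = n % b + 1 :=
    (Nat.div_mod_unique (by omega)).mpr ⟨by have := Nat.mod_add_div n b; omega, h⟩
  rw [digitSqSum_eq hb (n + 1), digitSqSum_eq hb n, hdiv, hmod]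
  ring

theorem digitSqSum_succ_of_mod_add_one_eq (hb : 1 < b) {n : ℕ} (h : n % b + 1 = b) :
    digitSqSum b (n + 1) = digitSqSum b (n / b + 1) := by
  obtain ⟨hdiv, hmod⟩ : (n + 1) / b = n / b + 1 ∧ (n + 1) % b = 0 :=
    (Nat.div_mod_unique (by omega)).mpr
      ⟨by have := Nat.mod_add_div n b; rw [mul_add]; omega, by omega⟩
  rw [digitSqSum_eq hb (n + 1), hdiv, hmod]
  simp

theorem digitSqSum_succ_le (hb : 1 < b) (n : ℕ) :
    digitSqSum b (n + 1) ≤ digitSqSum b n + (b - 1) ^ 2 := by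
  induction n using Nat.strong_induction_on with
  | _ n ih =>
  have hmod := Nat.mod_lt n (by omega : 0 < b)
  rcases (by omega : n % b + 1 < b ∨ n % b + 1 = b) with hlt | heq
  · rw [digitSqSum_succ_of_mod_add_one_lt hb hlt]
    obtain ⟨k, rfl⟩ : ∃ k, b = k + 2 := ⟨b - 2, by omega⟩
    have : 2 * (n % (k + 2)) + 1 ≤ (k + 2 - 1) ^ 2 := by
      rw [show k + 2 - 1 = k + 1 by omega]
      nlinarith
    omega
  · have hn : 0 < n := Nat.pos_of_ne_zero (by rintro rfl; simp at heq; omega)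
    calc digitSqSum b (n + 1) = digitSqSum b (n / b + 1) := digitSqSum_succ_of_mod_add_one_eq hb heq
      _ ≤ digitSqSum b (n / b) + (b - 1) ^ 2 := ih _ (Nat.div_lt_self hn hb)
      _ = digitSqSum b n := by rw [digitSqSum_eq hb n, show n % b = b - 1 by omega, add_comm]
      _ ≤ digitSqSum b n + (b - 1) ^ 2 := Nat.le_add_right _ _

theorem dvd_of_digitSqSum_succ_eq (hb : 1 < b) {n : ℕ}
    (h : digitSqSum b (n + 1) = digitSqSum b n + 1) : b ∣ n := by
  have hmod := Nat.mod_lt n (by omega : 0 < b)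
  rcases (by omega : n % b + 1 < b ∨ n % b + 1 = b) with hlt | heq
  · rw [digitSqSum_succ_of_mod_add_one_lt hb hlt] at h
    exact Nat.dvd_of_mod_eq_zero (by omega)
  · have hle := digitSqSum_succ_le hb (n / b)
    have hn := digitSqSum_eq hb n
    rw [← digitSqSum_succ_of_mod_add_one_eq hb heq] at hle
    rw [show n % b = b - 1 by omega] at hn
    omega

end digitSqSum

theorem dvd_of_isFixedPt_S_of_isFixedPt_S_succ {c b n : ℕ} (hb : 1 < b)
    (h : Function.IsFixedPt (S c b) n) (hsucc : Function.IsFixedPt (S c b) (n + 1)) : b ∣ n := by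
  simp only [Function.IsFixedPt, S_eq_add_digitSqSum] at h hsucc
  exact dvd_of_digitSqSum_succ_eq hb (by omega)

theorem stmt_2 (c b : ℕ) (hb : 2 ≤ b) :
    ¬ ∃ a : ℕ, 0 < a ∧ S c b a = a ∧ S c b (a + 1) = a + 1 ∧ S c b (a + 2) = a + 2 := by
  rintro ⟨a, -, h₀, h₁, h₂⟩
  have hdvd₀ : b ∣ a := dvd_of_isFixedPt_S_of_isFixedPt_S_succ hb h₀ h₁
  have hdvd₁ : b ∣ a + 1 := dvd_of_isFixedPt_S_of_isFixedPt_S_succ hb h₁ h₂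
  have : b ∣ 1 := (Nat.dvd_add_right hdvd₀).mp hdvd₁
  exact absurd (Nat.le_of_dvd one_pos this) (by omega)
end

section
/- Fix integers c > 0 and b ≥ 2 with b even, and suppose b² - 4c + 1 ≥ 0. Then the number of two-digit fixed points of S_{[c,b]} (fixed points a with b ≤ a < b²) equals (1/4)·r₂(b² - 4c + 1) + |F^(1)_{[c,b]}|, where r₂(m) is the number of ordered pairs (x,y) of integers with x² + y² = m. -/
/-- `r2 m` is the number of ordered pairs `(x, y) ∈ ℤ²` with `x² + y² = m`. -/
noncomputable def r2 (m : ℤ) : ℕ := Set.ncard {p : ℤ × ℤ | p.1 ^ 2 + p.2 ^ 2 = m}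

/-!
Write a two-digit number as `a = u * b + v` with digits `u ≠ 0` and `v`. Completing the square
turns the fixed-point equation `c + u² + v² = u * b + v` into
`(2u - b)² + (2v - 1)² = b² - 4c + 1`, so `a ↦ (2u - b, 2v - 1)` maps the two-digit fixed points
injectively to lattice points on this circle. The fixed points with `v = 0` are those of the form
`u * b`; since `c > 0` the circle lies inside the open square `(-b, b)²`, so the remaining ones
correspond exactly to the lattice points with `x` even and `y > 0`.
For even `b` the squared radius `b² - 4c + 1` is odd, so every lattice point on the circle has
exactly one even coordinate, and the odd one is nonzero; swapping the coordinates and reflecting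
`y` show that the points with `x` even and `y > 0` are a quarter of all of them.
-/

def circlePoints (m : ℤ) : Set (ℤ × ℤ) := {p | p.1 ^ 2 + p.2 ^ 2 = m}

theorem circlePoints_finite (m : ℤ) : (circlePoints m).Finite := by
  refine ((Set.finite_Icc (-m) m).prod (Set.finite_Icc (-m) m)).subset ?_
  rintro ⟨x, y⟩ (h : x ^ 2 + y ^ 2 = m)
  have := Int.le_self_sq x; have := Int.le_self_sq (-x)
  have := Int.le_self_sq y; have := Int.le_self_sq (-y)
  simp only [Set.mem_prod, Set.mem_Icc]
  refine ⟨⟨?_, ?_⟩, ?_, ?_⟩ <;> nlinarith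

theorem even_fst_iff_odd_snd {m : ℤ} (hm : Odd m) {p : ℤ × ℤ} (hp : p ∈ circlePoints m) :
    Even p.1 ↔ Odd p.2 := by
  rw [circlePoints, Set.mem_ofPred_eq] at hp
  subst hp
  rw [Int.odd_add, ← Int.not_even_iff_odd, Int.even_pow' two_ne_zero,
    Int.even_pow' two_ne_zero] at hm
  rw [← Int.not_even_iff_odd]
  tauto

theorem swap_mem_circlePoints {m : ℤ} {p : ℤ × ℤ} :
    p.swap ∈ circlePoints m ↔ p ∈ circlePoints m := by
  simp only [circlePoints, Set.mem_ofPred_eq, Prod.fst_swap, Prod.snd_swap, add_comm]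

theorem ncard_circlePoints_eq_two_mul {m : ℤ} (hm : Odd m) :
    (circlePoints m).ncard = 2 * {p ∈ circlePoints m | Even p.1}.ncard := by
  have hswap :
      circlePoints m \ {p | Even p.1} = Prod.swap '' {p ∈ circlePoints m | Even p.1} := by
    ext p
    rw [Set.image_swap_eq_preimage_swap]
    simp only [Set.mem_sdiff, Set.mem_preimage, Set.mem_ofPred_eq, Prod.fst_swap,
      swap_mem_circlePoints]
    refine and_congr_right fun hp => ?_
    rw [even_fst_iff_odd_snd hm hp, Int.not_odd_iff_even]
  rw [← Set.ncard_inter_add_ncard_sdiff_eq_ncard _ {p | Even p.1} (circlePoints_finite m), hswap,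
    Set.ncard_image_of_injective _ Prod.swap_injective, two_mul]
  rfl

theorem ncard_even_fst_eq_two_mul {m : ℤ} (hm : Odd m) :
    {p ∈ circlePoints m | Even p.1}.ncard =
      2 * {p ∈ circlePoints m | Even p.1 ∧ 0 < p.2}.ncard := by
  set reflect : ℤ × ℤ → ℤ × ℤ := Prod.map id Neg.neg
  have hinv : reflect.Involutive := fun p => Prod.ext rfl (neg_neg p.2)
  have hpos : {p ∈ circlePoints m | Even p.1} ∩ {p | 0 < p.2} =
      {p ∈ circlePoints m | Even p.1 ∧ 0 < p.2} := by
    ext p; simp only [Set.mem_inter_iff, Set.mem_ofPred_eq, and_assoc]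
  have hneg : {p ∈ circlePoints m | Even p.1} \ {p | 0 < p.2} =
      reflect '' {p ∈ circlePoints m | Even p.1 ∧ 0 < p.2} := by
    ext p
    rw [hinv.image_eq_preimage_symm]
    simp only [Set.mem_sdiff, Set.mem_preimage, Set.mem_ofPred_eq, reflect, Prod.map_fst,
      Prod.map_snd, id]
    have hmem : Prod.map id Neg.neg p ∈ circlePoints m ↔ p ∈ circlePoints m := by
      simp only [circlePoints, Set.mem_ofPred_eq, Prod.map_fst, Prod.map_snd, id, neg_sq]
    rw [hmem]
    constructor
    · rintro ⟨⟨hp, hx⟩, hy⟩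
      obtain ⟨k, hk⟩ := (even_fst_iff_odd_snd hm hp).1 hx
      exact ⟨hp, hx, by omega⟩
    · rintro ⟨hp, hx, hy⟩
      exact ⟨⟨hp, hx⟩, by omega⟩
  rw [← Set.ncard_inter_add_ncard_sdiff_eq_ncard _ {p | 0 < p.2} ((circlePoints_finite m).sep _),
    hpos, hneg, Set.ncard_image_of_injective _ hinv.injective, two_mul]

theorem r2_eq_four_mul_ncard {m : ℤ} (hm : Odd m) :
    r2 m = 4 * {p ∈ circlePoints m | Even p.1 ∧ 0 < p.2}.ncard := by
  change (circlePoints m).ncard = _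
  rw [ncard_circlePoints_eq_two_mul hm, ncard_even_fst_eq_two_mul hm]
  ring

theorem S_of_two_digit (c : ℕ) {b a : ℕ} (hb : 1 < b) (h1 : b ≤ a) (h2 : a < b ^ 2) :
    S c b a = c + (a % b) ^ 2 + (a / b) ^ 2 := by
  have hq : a / b ≠ 0 := (Nat.div_pos h1 (by omega)).ne'
  have hqb : a / b < b := Nat.div_lt_of_lt_mul (by rwa [← sq])
  conv_lhs => rw [← Nat.mod_add_div a b]
  rw [S, Nat.digits_add b hb _ _ (Nat.mod_lt _ (by omega)) (Or.inr hq), Nat.digits_of_lt b _ hq hqb]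
  simp only [List.map_cons, List.map_nil, List.sum_cons, List.sum_nil, add_zero, add_assoc]

def digitPoint (b a : ℕ) : ℤ × ℤ := (2 * ((a / b : ℕ) : ℤ) - b, 2 * ((a % b : ℕ) : ℤ) - 1)

theorem digitPoint_injective (b : ℕ) : Function.Injective (digitPoint b) := by
  intro a a' h
  simp only [digitPoint, Prod.mk.injEq] at h
  have hq : a / b = a' / b := by omega
  have hr : a % b = a' % b := by omega
  rw [← Nat.mod_add_div a b, ← Nat.mod_add_div a' b, hq, hr]

theorem digitPoint_add_mul {b v : ℕ} (u : ℕ) (hv : v < b) :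
    digitPoint b (v + b * u) = (2 * (u : ℤ) - b, 2 * (v : ℤ) - 1) := by
  have hb : 0 < b := by omega
  rw [digitPoint, Nat.add_mul_div_left _ _ hb, Nat.add_mul_mod_self_left, Nat.div_eq_of_lt hv,
    Nat.mod_eq_of_lt hv, zero_add]

def twoDigitFixedPoints (c b : ℕ) : Set ℕ := {a | b ≤ a ∧ a < b ^ 2 ∧ S c b a = a}

theorem mem_twoDigitFixedPoints_iff {c b a : ℕ} (hc : 0 < c) (hb : 1 < b) :
    a ∈ twoDigitFixedPoints c b ↔ digitPoint b a ∈ circlePoints ((b : ℤ) ^ 2 - 4 * c + 1) := by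
  have hdm : ((a % b : ℕ) : ℤ) + b * ((a / b : ℕ) : ℤ) = a := by exact_mod_cast Nat.mod_add_div a b
  change _ ↔
    (2 * ((a / b : ℕ) : ℤ) - b) ^ 2 + (2 * ((a % b : ℕ) : ℤ) - 1) ^ 2 = (b : ℤ) ^ 2 - 4 * c + 1
  constructor
  · rintro ⟨h1, h2, hS⟩
    rw [S_of_two_digit c hb h1 h2] at hS
    have hSz : (c : ℤ) + ((a % b : ℕ) : ℤ) ^ 2 + ((a / b : ℕ) : ℤ) ^ 2 = a := by exact_mod_cast hS
    linear_combination 4 * hSz - 4 * hdm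
  · intro h
    have hcz : (1 : ℤ) ≤ c := by exact_mod_cast hc
    obtain ⟨hlo, hhi⟩ := abs_lt.1 <| abs_lt_of_sq_lt_sq
      (by nlinarith [sq_nonneg (2 * ((a % b : ℕ) : ℤ) - 1)] :
        (2 * ((a / b : ℕ) : ℤ) - b) ^ 2 < (b : ℤ) ^ 2) (by positivity)
    have h1 : b ≤ a := by
      have : 1 ≤ a / b := by omega
      simpa using (Nat.le_div_iff_mul_le (by omega)).1 this
    have h2 : a < b ^ 2 := by
      rw [sq]; exact (Nat.div_lt_iff_lt_mul (by omega)).1 (by omega)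
    refine ⟨h1, h2, ?_⟩
    rw [S_of_two_digit c hb h1 h2]
    have : (c : ℤ) + ((a % b : ℕ) : ℤ) ^ 2 + ((a / b : ℕ) : ℤ) ^ 2 = a := by
      have h4 : 4 * ((c : ℤ) + ((a % b : ℕ) : ℤ) ^ 2 + ((a / b : ℕ) : ℤ) ^ 2) = 4 * a := by
        linear_combination h + 4 * hdm
      linarith
    exact_mod_cast this

theorem odd_sq_sub_four_mul_add_one {b : ℕ} (c : ℕ) (heven : Even b) :
    Odd ((b : ℤ) ^ 2 - 4 * c + 1) := by
  obtain ⟨t, rfl⟩ := heven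
  exact ⟨2 * (t : ℤ) ^ 2 - 2 * c, by push_cast; ring⟩

theorem ncard_twoDigitFixedPoints_sdiff_dvd {c b : ℕ} (hc : 0 < c) (hb : 1 < b) (heven : Even b) :
    (twoDigitFixedPoints c b \ {a | b ∣ a}).ncard =
      {p ∈ circlePoints ((b : ℤ) ^ 2 - 4 * c + 1) | Even p.1 ∧ 0 < p.2}.ncard := by
  set m : ℤ := (b : ℤ) ^ 2 - 4 * c + 1
  have hm : Odd m := odd_sq_sub_four_mul_add_one c heven
  rw [← Set.ncard_image_of_injective _ (digitPoint_injective b)]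
  congr 1
  ext p
  constructor
  · rintro ⟨a, ⟨hfix, hndvd⟩, rfl⟩
    have hr : a % b ≠ 0 := fun h => hndvd (Nat.dvd_of_mod_eq_zero h)
    refine ⟨(mem_twoDigitFixedPoints_iff hc hb).1 hfix, ?_, ?_⟩
    · simpa [digitPoint, parity_simps] using heven
    · simp only [digitPoint]; omega
  · rintro ⟨hp, ⟨k, hk⟩, hy⟩
    obtain ⟨j, hj⟩ := (even_fst_iff_odd_snd hm hp).1 ⟨k, hk⟩
    obtain ⟨t, rfl⟩ := heven
    have hcz : (1 : ℤ) ≤ c := by exact_mod_cast hc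
    have hcirc : p.1 ^ 2 + p.2 ^ 2 = m := hp
    obtain ⟨hxlo, hxhi⟩ := abs_lt.1 <| abs_lt_of_sq_lt_sq
      (by push_cast [m] at hcirc; nlinarith [sq_nonneg p.2] : p.1 ^ 2 < (2 * t : ℤ) ^ 2)
      (by positivity)
    obtain ⟨-, hyhi⟩ := abs_lt.1 <| abs_lt_of_sq_lt_sq
      (by push_cast [m] at hcirc; nlinarith [sq_nonneg p.1] : p.2 ^ 2 < (2 * t : ℤ) ^ 2)
      (by positivity)
    obtain ⟨u, hu⟩ : ∃ u : ℕ, (u : ℤ) = k + t := ⟨(k + t).toNat, Int.toNat_of_nonneg (by omega)⟩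
    obtain ⟨v, hv⟩ : ∃ v : ℕ, (v : ℤ) = j + 1 := ⟨(j + 1).toNat, Int.toNat_of_nonneg (by omega)⟩
    have hvb : v < t + t := by omega
    have hpuv : p = digitPoint (t + t) (v + (t + t) * u) := by
      rw [digitPoint_add_mul u hvb]
      ext <;> push_cast <;> omega
    refine ⟨v + (t + t) * u, ⟨(mem_twoDigitFixedPoints_iff hc hb).2 (hpuv ▸ hp), ?_⟩, hpuv.symm⟩
    rw [Set.mem_ofPred_eq, Nat.dvd_add_left (Nat.dvd_mul_right _ _)]
    exact Nat.not_dvd_of_pos_of_lt (by omega) hvb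

theorem twoDigitFixedPoints_inter_dvd {c b : ℕ} (hb : 1 < b) :
    twoDigitFixedPoints c b ∩ {a | b ∣ a} =
      {a | ∃ u : ℕ, 0 < u ∧ u < b ∧ a = u * b ∧ S c b a = a} := by
  ext a
  constructor
  · rintro ⟨⟨h1, h2, hS⟩, u, rfl⟩
    refine ⟨u, ?_, ?_, mul_comm b u, hS⟩
    · exact Nat.pos_of_ne_zero fun hu => by simp [hu] at h1; omega
    · exact lt_of_mul_lt_mul_left (by rwa [← sq]) (Nat.zero_le b)
  · rintro ⟨u, hu0, hub, rfl, hS⟩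
    have h2 : u * b < b ^ 2 := by rw [sq]; exact Nat.mul_lt_mul_of_pos_right hub (by omega)
    exact ⟨⟨Nat.le_mul_of_pos_left b hu0, h2, hS⟩, Dvd.intro_left u rfl⟩

theorem stmt_13_general (c b : ℕ) (hc : 0 < c) (hb : 2 ≤ b) (heven : Even b) :
    4 * Set.ncard {a : ℕ | b ≤ a ∧ a < b ^ 2 ∧ S c b a = a} =
      r2 ((b : ℤ) ^ 2 - 4 * c + 1) +
        4 * Set.ncard {a : ℕ | ∃ u : ℕ, 0 < u ∧ u < b ∧ a = u * b ∧ S c b a = a} := by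
  have hfin : (twoDigitFixedPoints c b).Finite := (Set.finite_Iio (b ^ 2)).subset fun a ha => ha.2.1
  change 4 * (twoDigitFixedPoints c b).ncard = _
  rw [← Set.ncard_inter_add_ncard_sdiff_eq_ncard _ {a | b ∣ a} hfin,
    twoDigitFixedPoints_inter_dvd (by omega),
    ncard_twoDigitFixedPoints_sdiff_dvd hc (by omega) heven,
    r2_eq_four_mul_ncard (odd_sq_sub_four_mul_add_one c heven)]
  ring

theorem stmt_13 (c b : ℕ) (hc : 0 < c) (hb : 2 ≤ b) (heven : Even b)
    (hpos : 0 ≤ (b : ℤ) ^ 2 - 4 * c + 1) :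
    4 * Set.ncard {a : ℕ | b ≤ a ∧ a < b ^ 2 ∧ S c b a = a} =
      r2 ((b : ℤ) ^ 2 - 4 * c + 1) +
        4 * Set.ncard {a : ℕ | ∃ u : ℕ, 0 < u ∧ u < b ∧ a = u * b ∧ S c b a = a} :=
  stmt_13_general c b hc hb heven
end
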